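/- arXiv:0801.1060 — 2 statements merged into one kernel-verified Lean document; each statement's English description precedes it below -/
import Mathlib

section
/- For any j ≥ 0, F_{2^j + 1} consists exactly of the words of the form f* f*_1, where f* = f*_1 f*_2 … f*_{2^j} ranges over all binary words of length 2^j; i.e., a word of length 2^j + 1 is in F_{2^j+1} if and only if its first and last letters are equal. -/
/-- The sliding-block map ψ on binary words: ψ(u₁…uₙ) = u*₁…u*ₙ₋₁ with u*ᵢ = uᵢ + uᵢ₊₁ (mod 2). -/
def psiW : List (ZMod 2) → List (ZMod 2)
  | a :: b :: rest => (a + b) :: psiW (b :: rest)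
  | _ => []

/-- The forbidden sets: F 1 = {0}, F (k+1) = ψ⁻¹(F k). -/
def F : ℕ → Set (List (ZMod 2))
  | 0 => ∅
  | 1 => {[(0 : ZMod 2)]}
  | (k + 1) => psiW ⁻¹' F k

/-!
The `2^j`-th iterate of ψ acts entrywise as `u ↦ (uᵢ + u_{i+2^j})ᵢ`: going from `2^j` to
`2^(j+1)` means applying this map twice, and the two middle terms `u_{i+2^j}` cancel in
characteristic 2 (the Frobenius identity `(1 + x)^(2^j) = 1 + x^(2^j)` over `𝔽₂`). A word of
length `2^j + 1` is therefore sent to the single letter `u₀ + u_{2^j}`, which is `0` iff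
`u₀ = u_{2^j}`.
-/

lemma length_psiW : ∀ u : List (ZMod 2), (psiW u).length = u.length - 1
  | [] => rfl
  | [_] => rfl
  | a :: b :: rest => by simp [psiW, length_psiW (b :: rest)]

lemma length_iterate_psiW (k : ℕ) (u : List (ZMod 2)) :
    (psiW^[k] u).length = u.length - k := by
  induction k with
  | zero => rfl
  | succ k ih => rw [Function.iterate_succ_apply', length_psiW, ih, Nat.sub_sub]

lemma getD_psiW : ∀ (u : List (ZMod 2)) (i : ℕ), i + 1 < u.length →
    (psiW u).getD i 0 = u.getD i 0 + u.getD (i + 1) 0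
  | a :: b :: rest, 0, _ => rfl
  | a :: b :: rest, i + 1, h => getD_psiW (b :: rest) i (by simpa using h)

lemma getD_iterate_psiW_two_pow (j : ℕ) (u : List (ZMod 2)) (i : ℕ)
    (h : i + 2 ^ j < u.length) :
    (psiW^[2 ^ j] u).getD i 0 = u.getD i 0 + u.getD (i + 2 ^ j) 0 := by
  induction j generalizing u i with
  | zero => exact getD_psiW u i h
  | succ j ih =>
    have hj : 2 ^ (j + 1) = 2 ^ j + 2 ^ j := by rw [pow_succ, mul_two]
    rw [hj, ← add_assoc] at h ⊢
    rw [Function.iterate_add_apply,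
      ih _ i (by rwa [length_iterate_psiW, Nat.lt_sub_iff_add_lt]),
      ih u i ((Nat.le_add_right _ _).trans_lt h), ih u (i + 2 ^ j) h,
      add_assoc, CharTwo.add_cancel_left]

lemma mem_F_succ_iff (n : ℕ) (u : List (ZMod 2)) : u ∈ F (n + 1) ↔ psiW^[n] u = [0] := by
  induction n generalizing u with
  | zero => rfl
  | succ n ih => exact (ih (psiW u)).trans (by rw [Function.iterate_succ_apply])

/-- a word of length 2^j + 1 is in F_{2^j+1} iff its first and last letters agree. -/
theorem stmt_7 (j : ℕ) (u : List (ZMod 2)) (hu : u.length = 2 ^ j + 1) :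
    u ∈ F (2 ^ j + 1) ↔ u.getD 0 0 = u.getD (2 ^ j) 0 := by
  have hlen : (psiW^[2 ^ j] u).length = 1 := by rw [length_iterate_psiW, hu]; omega
  obtain ⟨x, hx⟩ := List.length_eq_one_iff.mp hlen
  have hx_eq : x = u.getD 0 0 + u.getD (2 ^ j) 0 := by
    rw [← zero_add (2 ^ j), ← getD_iterate_psiW_two_pow j u 0 (by omega), hx]
    rfl
  rw [mem_F_succ_iff, hx, List.singleton_inj, hx_eq, CharTwo.add_eq_zero]
end

section
/- For any j ≥ 0 and any k with 2^j + 1 ≤ k ≤ 2^{j+1}, every period of every periodic bi-infinite sequence in the PFT X_k is a multiple of 2^{j+1}. -/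
/-- ψ on bi-infinite binary sequences. -/
def psiZ (x : ℤ → ZMod 2) : ℤ → ZMod 2 := fun i => x i + x (i + 1)

/-- Length-`k` subword of `x` starting at index `i`. -/
def subword (x : ℤ → ZMod 2) (i : ℤ) (k : ℕ) : List (ZMod 2) :=
  (List.range k).map fun t => x (i + t)

/-- Membership in the PFT X_k: for some shift r ∈ {0,1}, no subword of σʳ(x) starting at an
even index belongs to F k. -/
def inX (k : ℕ) (x : ℤ → ZMod 2) : Prop :=
  ∃ r : ℕ, r < 2 ∧ ∀ i : ℤ, Even i → subword x (i + r) k ∉ F k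

open Function

lemma subword_succ (x : ℤ → ZMod 2) (i : ℤ) (k : ℕ) :
    subword x i (k + 1) = x i :: subword x (i + 1) k := by
  -- `List.range k` is coerced to `List ℤ` in `subword`, which elaborates as a monadic bind
  simp only [subword, List.range_succ_eq_map, bind_pure_comp, List.map_eq_map, List.map_map,
    List.map_cons, Function.comp_def]
  simp [add_assoc, add_comm (1 : ℤ)]

lemma psiW_subword (x : ℤ → ZMod 2) (i : ℤ) (k : ℕ) :
    psiW (subword x i (k + 1)) = subword (psiZ x) i k := by
  induction k generalizing i with
  | zero => rfl
  | succ k ih =>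
    rw [subword_succ, subword_succ, subword_succ, ← ih (i + 1), subword_succ]
    rfl

lemma subword_mem_F_iff (x : ℤ → ZMod 2) (i : ℤ) (k : ℕ) :
    subword x i (k + 1) ∈ F (k + 1) ↔ psiZ^[k] x i = 0 := by
  induction k generalizing x with
  | zero => simp [subword, F]
  | succ k ih =>
    rw [show F (k + 2) = psiW ⁻¹' F (k + 1) from rfl, Set.mem_preimage, psiW_subword, ih,
      iterate_succ_apply]

lemma iterate_psiZ_two_pow (x : ℤ → ZMod 2) (i : ℤ) (j : ℕ) :
    psiZ^[2 ^ j] x i = x i + x (i + 2 ^ j) := by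
  induction j generalizing x i with
  | zero => simp [psiZ]
  | succ j ih =>
    rw [pow_succ, mul_two, iterate_add_apply, ih, ih, ih, pow_succ, mul_two, ← add_assoc i,
      add_assoc (x i), ← add_assoc (x (i + 2 ^ j)), CharTwo.add_self_eq_zero, zero_add]

lemma periodic_psiZ {x : ℤ → ZMod 2} {c : ℤ} (h : Periodic x c) : Periodic (psiZ x) c :=
  fun i => by simp only [psiZ, h i, add_right_comm i c 1, h (i + 1)]

lemma periodic_iterate_psiZ {x : ℤ → ZMod 2} {c : ℤ} (h : Periodic x c) (n : ℕ) :
    Periodic (psiZ^[n] x) c := by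
  induction n with
  | zero => exact h
  | succ n ih => rw [iterate_succ_apply']; exact periodic_psiZ ih

lemma inX.exists_iterate_psiZ_ne {j n : ℕ} {x : ℤ → ZMod 2} (hx : inX (2 ^ j + n + 1) x) :
    ∃ r : ℤ, ∀ i, Even i → psiZ^[n] x (i + r + 2 ^ j) ≠ psiZ^[n] x (i + r) := by
  obtain ⟨r, -, hr⟩ := hx
  refine ⟨r, fun i hi heq => hr i hi ?_⟩
  rw [subword_mem_F_iff, iterate_add_apply, iterate_psiZ_two_pow, heq,
    CharTwo.add_self_eq_zero]

lemma ZMod.eq_add_one_of_ne {a b : ZMod 2} (h : a ≠ b) : a = b + 1 := by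
  revert a b
  decide

lemma exists_odd_mul_two_pow_eq_mul {j p : ℕ} (h : ¬ 2 ^ (j + 1) ∣ p) :
    ∃ q n : ℕ, Odd q ∧ q * 2 ^ j = n * p := by
  have hp : p ≠ 0 := by
    rintro rfl
    exact h (dvd_zero _)
  obtain ⟨v, q, hq, rfl⟩ := Nat.exists_eq_two_pow_mul_odd hp
  have hvj : v ≤ j := by
    by_contra! hv
    exact h (Dvd.dvd.mul_right (pow_dvd_pow 2 hv) q)
  refine ⟨q, 2 ^ (j - v), hq, ?_⟩
  rw [mul_left_comm, ← mul_assoc, ← pow_add, Nat.add_sub_of_le hvj, mul_comm]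

lemma apply_natCast_mul_eq_add {G : Type*} [AddMonoidWithOne G] {f : ℤ → G} {c : ℤ}
    (hf : ∀ n : ℕ, f (n * c + c) = f (n * c) + 1) (n : ℕ) : f (n * c) = f 0 + n := by
  induction n with
  | zero => simp
  | succ n ih => rw [Nat.cast_succ, add_one_mul, hf, ih, Nat.cast_succ, add_assoc]

lemma Function.Periodic.apply_mul_two_pow_add_ne {α : Type*} {j p : ℕ} {y : ℤ → α}
    (hy : Periodic y p) (hp : ¬ 2 ^ (j + 1) ∣ p) (hy_ne : ∀ i, Even i → y (i + 2 ^ j) ≠ y i)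
    (u : ℤ) : y (u * 2 ^ j + 2 ^ j) ≠ y (u * 2 ^ j) := by
  rcases j with _ | j
  · have hp_odd : Odd (p : ℤ) := by
      rw [Int.odd_coe_nat, Nat.odd_iff]
      omega
    simp only [pow_zero, mul_one] at hy_ne ⊢
    rcases Int.even_or_odd u with hu | hu
    · exact hy_ne u hu
    · have := hy_ne (u + p) (hu.add_odd hp_odd)
      rwa [add_right_comm, hy, hy] at this
  · exact hy_ne _ ((even_two.pow_of_ne_zero j.succ_ne_zero).mul_left u)

lemma two_pow_succ_dvd_of_periodic {j p : ℕ} {y : ℤ → ZMod 2} (hy : Periodic y p)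
    (hy_ne : ∀ i, Even i → y (i + 2 ^ j) ≠ y i) : 2 ^ (j + 1) ∣ p := by
  by_contra hp
  obtain ⟨q, n, hq, hqn⟩ := exists_odd_mul_two_pow_eq_mul hp
  have hyq := apply_natCast_mul_eq_add
    (fun u => ZMod.eq_add_one_of_ne (hy.apply_mul_two_pow_add_ne hp hy_ne u)) q
  rw [show (q : ℤ) * 2 ^ j = n * p by exact_mod_cast hqn, hy.nat_mul_eq,
    ZMod.natCast_eq_one_iff_odd.mpr hq] at hyq
  simp at hyq

theorem stmt_12_general (j k : ℕ) (hk1 : 2 ^ j + 1 ≤ k)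
    (x : ℤ → ZMod 2) (hx : inX k x) (p : ℕ)
    (hper : ∀ i : ℤ, x (i + p) = x i) : 2 ^ (j + 1) ∣ p := by
  obtain ⟨n, rfl⟩ := Nat.exists_eq_add_of_le hk1
  obtain ⟨r, hr⟩ := (add_right_comm (2 ^ j) 1 n ▸ hx).exists_iterate_psiZ_ne
  refine two_pow_succ_dvd_of_periodic ((periodic_iterate_psiZ hper n).add_const r) fun i hi => ?_
  simpa only [add_right_comm i (2 ^ j : ℤ) r] using hr i hi

/-- for 2^j + 1 ≤ k ≤ 2^{j+1}, every period of a periodic sequence in X_k is a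
multiple of 2^{j+1}. -/
theorem stmt_12 (j k : ℕ) (hk1 : 2 ^ j + 1 ≤ k) (hk2 : k ≤ 2 ^ (j + 1))
    (x : ℤ → ZMod 2) (hx : inX k x) (p : ℕ) (hp : 0 < p)
    (hper : ∀ i : ℤ, x (i + p) = x i) : 2 ^ (j + 1) ∣ p :=
  stmt_12_general j k hk1 x hx p hper
end
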